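/- Let α ∈ (−1/2, −1/(2d)] for d ≥ 1, let g_i : ℝ → ℝ be bounded measurable for 2 ≤ i ≤ d, and define f(t, x₁, …, x_d) := t^{−1/4} (min(|x₁|,1))^α Π_{i=2}^d g_i(x_i). Then |f|² satisfies hypothesis (H_p) with p = d + 2α + 1 > d: there exists M > 0 such that sup_{t≥0, x∈ℝ^d} ∫₀^{r²} ∫_{B(x,r)} |f(t+s,y)|² dy ds ≤ M r^{d+2α+1} for all 0 < r < 1. -/

import Mathlib

open MeasureTheory Real Set Metric Function

-- subadditivity of rpow for exponents ≤ 1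
lemma my_rpow_sub_le {γ c e : ℝ} (hγ0 : 0 ≤ γ) (hγ1 : γ ≤ 1) (hc : 0 ≤ c) (hce : c ≤ e) :
    e ^ γ - c ^ γ ≤ (e - c) ^ γ := by
  have hz : 0 ≤ e - c := by linarith
  have h := NNReal.rpow_add_le_add_rpow c.toNNReal (e - c).toNNReal hγ0 hγ1
  have h' : ((c.toNNReal + (e - c).toNNReal : NNReal) : ℝ) ^ γ
      ≤ ((c.toNNReal : ℝ)) ^ γ + (((e - c).toNNReal : ℝ)) ^ γ := by
    exact_mod_cast h
  rw [NNReal.coe_add, Real.coe_toNNReal _ hc, Real.coe_toNNReal _ hz] at h'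
  have : c + (e - c) = e := by ring
  rw [this] at h'
  linarith

-- integrability of |u|^β on Ioc
lemma my_abs_rpow_integrableOn {β : ℝ} (hβ : -1 < β) (c e : ℝ) :
    IntegrableOn (fun u : ℝ => |u| ^ β) (Set.Ioc c e) := by
  set R : ℝ := |c| + |e| + 1 with hR
  have hR0 : 0 ≤ R := by positivity
  have hsub : Set.Ioc c e ⊆ Set.Ioc (-R) 0 ∪ Set.Ioc 0 R := by
    intro u hu
    rcases le_or_gt u 0 with h | h
    · left
      refine ⟨lt_of_le_of_lt ?_ hu.1, h⟩
      have := abs_nonneg (e); have := neg_abs_le c; simp only [hR]; linarith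
    · right
      refine ⟨h, hu.2.trans ?_⟩
      have := le_abs_self e; have := abs_nonneg c; simp only [hR]; linarith
  have hpos : IntegrableOn (fun u : ℝ => |u| ^ β) (Set.Ioc 0 R) := by
    have h1 : IntegrableOn (fun u : ℝ => u ^ β) (Set.Ioc 0 R) :=
      (intervalIntegral.intervalIntegrable_rpow' hβ (a := 0) (b := R)).1
    exact h1.congr_fun (fun u hu => by rw [abs_of_pos hu.1]) measurableSet_Ioc
  have hneg : IntegrableOn (fun u : ℝ => |u| ^ β) (Set.Ioc (-R) 0) := by
    have h1 : IntegrableOn (fun u : ℝ => |u| ^ β) (Set.Ico 0 R) :=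
      hpos.congr_set_ae (MeasureTheory.Ico_ae_eq_Ioc (μ := volume) (a := (0:ℝ)) (b := R))
    have hmp : MeasurePreserving (fun u : ℝ => -u) volume volume :=
      Measure.measurePreserving_neg volume
    have hemb : MeasurableEmbedding (fun u : ℝ => -u) :=
      (Homeomorph.neg ℝ).measurableEmbedding
    have h2 := (hmp.integrableOn_comp_preimage hemb
      (f := fun u : ℝ => |u| ^ β) (s := Set.Ico 0 R)).2 h1
    have hset : (fun u : ℝ => -u) ⁻¹' Set.Ico 0 R = Set.Ioc (-R) 0 := by
      ext u; simp only [Set.mem_preimage, Set.mem_Ico, Set.mem_Ioc]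
      constructor <;> intro h <;> constructor <;> linarith [h.1, h.2]
    rw [hset] at h2
    exact h2.congr_fun (fun u _ => by simp [Function.comp, abs_neg]) measurableSet_Ioc
  exact ((hneg.union hpos).mono_set hsub)

lemma my_L1 {β : ℝ} (hβ : -1 < β) (hβ1 : β ≤ 0) {c e : ℝ} (hc : 0 ≤ c) (hce : c ≤ e) :
    ∫ u in Set.Ioc c e, |u| ^ β ≤ (e - c) ^ (β + 1) / (β + 1) := by
  have hγ0 : (0:ℝ) < β + 1 := by linarith
  rw [← intervalIntegral.integral_of_le hce]
  have hcongr : ∫ u in c..e, |u| ^ β = ∫ u in c..e, u ^ β := by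
    apply intervalIntegral.integral_congr
    intro u hu
    rw [Set.uIcc_of_le hce] at hu
    rcases eq_or_lt_of_le (hc.trans hu.1) with h | h
    · simp [← h]
    · simp only [abs_of_pos h]
  rw [hcongr, integral_rpow (Or.inl hβ)]
  have h2 := my_rpow_sub_le (le_of_lt hγ0) (by linarith) hc hce
  exact (div_le_div_iff_of_pos_right hγ0).2 h2

lemma my_L2 {β : ℝ} (hβ : -1 < β) (hβ1 : β ≤ 0) {c e : ℝ} (he : e ≤ 0) (hce : c ≤ e) :
    ∫ u in Set.Ioc c e, |u| ^ β ≤ (e - c) ^ (β + 1) / (β + 1) := by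
  rw [← intervalIntegral.integral_of_le hce]
  have h1 : ∫ u in c..e, |u| ^ β = ∫ u in c..e, (fun v : ℝ => |v| ^ β) (-u) := by
    apply intervalIntegral.integral_congr; intro u _; simp [abs_neg]
  rw [h1, intervalIntegral.integral_comp_neg (fun v : ℝ => |v| ^ β),
    intervalIntegral.integral_of_le (by linarith : -e ≤ -c)]
  have := my_L1 hβ hβ1 (by linarith : (0:ℝ) ≤ -e) (by linarith : -e ≤ -c)
  simpa [neg_sub, sub_neg_eq_add, show -c - -e = e - c by ring] using this

lemma my_abs_int_bound {β : ℝ} (hβ : -1 < β) (hβ1 : β ≤ 0) {a r : ℝ} (hr : 0 < r) :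
    ∫ u in Set.Ioc (a - r) (a + r), |u| ^ β ≤ 4 * r ^ (β + 1) / (β + 1) := by
  have hγ0 : (0:ℝ) < β + 1 := by linarith
  have hrγ : (0:ℝ) ≤ r ^ (β + 1) := rpow_nonneg hr.le _
  have key : ∀ c e : ℝ, c ≤ e → e - c ≤ 2 * r → (e - c) ^ (β+1) ≤ 2 * r ^ (β+1) := by
    intro c e hce hle
    calc (e - c) ^ (β+1) ≤ (2*r) ^ (β+1) :=
          Real.rpow_le_rpow (by linarith) hle hγ0.le
      _ = 2 ^ (β+1) * r ^ (β+1) := Real.mul_rpow (by norm_num) hr.le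
      _ ≤ 2 * r ^ (β+1) := by
          apply mul_le_mul_of_nonneg_right _ hrγ
          calc (2:ℝ) ^ (β+1) ≤ 2 ^ (1:ℝ) :=
                Real.rpow_le_rpow_of_exponent_le one_le_two (by linarith)
            _ = 2 := Real.rpow_one 2
  rcases le_or_gt (a + r) 0 with h1 | h1
  · calc ∫ u in Set.Ioc (a - r) (a + r), |u| ^ β
        ≤ (a + r - (a - r)) ^ (β+1) / (β + 1) := my_L2 hβ hβ1 h1 (by linarith)
      _ ≤ 4 * r ^ (β+1) / (β + 1) := by
          apply div_le_div_of_nonneg_right _ hγ0.le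
          have := key (a-r) (a+r) (by linarith) (by linarith)
          linarith
  · rcases le_or_gt 0 (a - r) with h2 | h2
    · calc ∫ u in Set.Ioc (a - r) (a + r), |u| ^ β
          ≤ (a + r - (a - r)) ^ (β+1) / (β + 1) := my_L1 hβ hβ1 h2 (by linarith)
        _ ≤ 4 * r ^ (β+1) / (β + 1) := by
            apply div_le_div_of_nonneg_right _ hγ0.le
            have := key (a-r) (a+r) (by linarith) (by linarith)
            linarith
    · have hsplit : Set.Ioc (a - r) (a + r) = Set.Ioc (a - r) 0 ∪ Set.Ioc 0 (a + r) :=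
        (Set.Ioc_union_Ioc_eq_Ioc h2.le h1.le).symm
      rw [hsplit, setIntegral_union (Set.Ioc_disjoint_Ioc_of_le le_rfl) measurableSet_Ioc
        (my_abs_rpow_integrableOn hβ _ _) (my_abs_rpow_integrableOn hβ _ _)]
      have hb1 : ∫ u in Set.Ioc (a - r) 0, |u| ^ β ≤ (0 - (a - r)) ^ (β+1) / (β+1) :=
        my_L2 hβ hβ1 le_rfl h2.le
      have hb2 : ∫ u in Set.Ioc 0 (a + r), |u| ^ β ≤ (a + r - 0) ^ (β+1) / (β+1) :=
        my_L1 hβ hβ1 le_rfl h1.le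
      have k1 := key (a - r) 0 h2.le (by linarith)
      have k2 := key 0 (a + r) h1.le (by linarith)
      have e1 : (0 - (a - r)) ^ (β+1) / (β+1) ≤ 2 * r ^ (β+1) / (β+1) :=
        div_le_div_of_nonneg_right (by linarith) hγ0.le
      have e2 : (a + r - 0) ^ (β+1) / (β+1) ≤ 2 * r ^ (β+1) / (β+1) :=
        div_le_div_of_nonneg_right (by linarith) hγ0.le
      have : 2 * r ^ (β+1) / (β+1) + 2 * r ^ (β+1) / (β+1) = 4 * r ^ (β+1) / (β+1) := by ring
      linarith

lemma my_min_le {β : ℝ} (hβ1 : β ≤ 0) (u : ℝ) :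
    (min |u| 1) ^ β ≤ |u| ^ β + 1 := by
  rcases le_or_gt |u| 1 with h | h
  · rw [min_eq_left h]
    have : (0:ℝ) ≤ |u| ^ β := Real.rpow_nonneg (abs_nonneg u) β
    linarith
  · rw [min_eq_right h.le, Real.one_rpow]
    have : (0:ℝ) ≤ |u| ^ β := Real.rpow_nonneg (abs_nonneg u) β
    linarith

lemma my_min_nonneg (β u : ℝ) : (0:ℝ) ≤ (min |u| 1) ^ β :=
  Real.rpow_nonneg (le_min (abs_nonneg u) zero_le_one) β

lemma my_min_measurable (β : ℝ) : Measurable (fun u : ℝ => (min |u| 1) ^ β) := by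
  measurability

lemma my_min_integrableOn {β : ℝ} (hβ : -1 < β) (hβ1 : β ≤ 0) (c e : ℝ) :
    IntegrableOn (fun u : ℝ => (min |u| 1) ^ β) (Set.Ioc c e) := by
  have hg : IntegrableOn (fun u : ℝ => |u| ^ β + 1) (Set.Ioc c e) :=
    (my_abs_rpow_integrableOn hβ c e).add (integrableOn_const measure_Ioc_lt_top.ne)
  refine Integrable.mono' hg ((my_min_measurable β).aestronglyMeasurable) ?_
  filter_upwards with u
  rw [Real.norm_eq_abs, abs_of_nonneg (my_min_nonneg β u)]
  exact my_min_le hβ1 u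

lemma my_min_int_bound {β : ℝ} (hβ : -1 < β) (hβ1 : β ≤ 0) {a r : ℝ}
    (hr : 0 < r) (hr1 : r < 1) :
    ∫ u in Set.Ioc (a - r) (a + r), (min |u| 1) ^ β ≤ (4 / (β + 1) + 2) * r ^ (β + 1) := by
  have hγ0 : (0:ℝ) < β + 1 := by linarith
  have hstep : ∫ u in Set.Ioc (a - r) (a + r), (min |u| 1) ^ β
      ≤ ∫ u in Set.Ioc (a - r) (a + r), (|u| ^ β + 1) := by
    refine setIntegral_mono_on (my_min_integrableOn hβ hβ1 _ _)
      ((my_abs_rpow_integrableOn hβ _ _).add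
        (integrableOn_const measure_Ioc_lt_top.ne))
      measurableSet_Ioc (fun u _ => my_min_le hβ1 u)
  have hsplit : ∫ u in Set.Ioc (a - r) (a + r), (|u| ^ β + 1)
      = (∫ u in Set.Ioc (a - r) (a + r), |u| ^ β) + (2 * r) := by
    rw [integral_add (my_abs_rpow_integrableOn hβ _ _)
      (integrableOn_const measure_Ioc_lt_top.ne)]
    congr 1
    rw [setIntegral_const, measureReal_def, Real.volume_Ioc, smul_eq_mul, mul_one,
      ENNReal.toReal_ofReal (by linarith : (0:ℝ) ≤ a + r - (a - r))]
    ring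
  have h1 := my_abs_int_bound hβ hβ1 (a := a) hr
  have h2 : r ≤ r ^ (β + 1) := by
    calc r = r ^ (1:ℝ) := (Real.rpow_one r).symm
      _ ≤ r ^ (β + 1) := Real.rpow_le_rpow_of_exponent_ge hr hr1.le (by linarith)
  have h3 : 4 * r ^ (β+1) / (β+1) = (4 / (β+1)) * r ^ (β+1) := by ring
  linarith

lemma my_rect_bound (d : ℕ) (hd : 0 < d) {β : ℝ} (hβ : -1 < β) (hβ1 : β ≤ 0)
    (x : Fin d → ℝ) {r : ℝ} (hr : 0 < r) (hr1 : r < 1) :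
    IntegrableOn (fun y : Fin d → ℝ => (min |y (⟨0, hd⟩ : Fin d)| 1) ^ β)
      (Set.pi Set.univ fun i => Set.Ioc (x i - r) (x i + r)) ∧
    (∫ y in Set.pi Set.univ fun i => Set.Ioc (x i - r) (x i + r),
        (min |y (⟨0, hd⟩ : Fin d)| 1) ^ β)
      ≤ (4 / (β + 1) + 2) * r ^ (β + 1) * (2 * r) ^ (d - 1) := by
  set e0 : Fin d := ⟨0, hd⟩ with he0
  set I : Fin d → Set ℝ := fun i => Set.Ioc (x i - r) (x i + r) with hI
  set F : Fin d → ℝ → ℝ := fun i u =>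
    if i = e0 then (I i).indicator (fun v => (min |v| 1) ^ β) u
    else (I i).indicator (fun _ => (1:ℝ)) u with hF
  have hFi : ∀ i, Integrable (F i) := by
    intro i
    by_cases h : i = e0
    · simp only [hF, if_pos h]
      exact (integrable_indicator_iff measurableSet_Ioc).2 (my_min_integrableOn hβ hβ1 _ _)
    · simp only [hF, if_neg h]
      exact (integrable_indicator_iff measurableSet_Ioc).2
        (integrableOn_const measure_Ioc_lt_top.ne)
  have hprod : (Set.pi Set.univ I).indicator
      (fun y : Fin d → ℝ => (min |y e0| 1) ^ β) = fun y => ∏ i, F i (y i) := by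
    funext y
    by_cases hy : y ∈ Set.pi Set.univ I
    · rw [Set.indicator_of_mem hy]
      symm
      rw [Finset.prod_eq_single e0 ?_ ?_]
      · simp only [hF, if_pos rfl]
        rw [Set.indicator_of_mem (hy e0 (Set.mem_univ _))]
      · intro i _ hi
        simp only [hF, if_neg hi]
        rw [Set.indicator_of_mem (hy i (Set.mem_univ _))]
      · intro h; exact absurd (Finset.mem_univ e0) h
    · rw [Set.indicator_of_notMem hy]
      symm
      rw [Set.mem_pi] at hy
      push_neg at hy
      obtain ⟨i, _, hi⟩ := hy
      apply Finset.prod_eq_zero (Finset.mem_univ i)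
      by_cases h : i = e0
      · subst h; simp only [hF, if_pos rfl]; exact Set.indicator_of_notMem hi _
      · simp only [hF, if_neg h]; exact Set.indicator_of_notMem hi _
  have hpi_meas : MeasurableSet (Set.pi Set.univ I) :=
    MeasurableSet.univ_pi fun i => measurableSet_Ioc
  have hprodInt : Integrable (fun y : Fin d → ℝ => ∏ i, F i (y i)) :=
    Integrable.fintype_prod (𝕜 := ℝ) hFi
  constructor
  · exact (integrable_indicator_iff hpi_meas).1 (hprod ▸ hprodInt)
  · have hval : (∫ y in Set.pi Set.univ I, (min |y e0| 1) ^ β)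
        = ∏ i, ∫ u, F i u := by
      rw [← integral_indicator hpi_meas, hprod]
      exact MeasureTheory.integral_fintype_prod_eq_prod F
    rw [hval, ← Finset.mul_prod_erase Finset.univ (fun i => ∫ u, F i u)
      (Finset.mem_univ e0)]
    have hother : ∀ i ∈ Finset.univ.erase e0, (∫ u, F i u) = 2 * r := by
      intro i hi
      have hne : i ≠ e0 := (Finset.mem_erase.1 hi).1
      simp only [hF, if_neg hne]
      rw [MeasureTheory.integral_indicator_const (1:ℝ) measurableSet_Ioc]
      simp only [hI, measureReal_def, Real.volume_Ioc, smul_eq_mul, mul_one]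
      rw [ENNReal.toReal_ofReal (by linarith : (0:ℝ) ≤ x i + r - (x i - r))]
      ring
    rw [Finset.prod_congr rfl hother, Finset.prod_const,
      Finset.card_erase_of_mem (Finset.mem_univ e0), Finset.card_univ, Fintype.card_fin]
    have he0int : (∫ u, F e0 u) = ∫ u in Set.Ioc (x e0 - r) (x e0 + r), (min |u| 1) ^ β := by
      simp only [hF, if_pos rfl]
      rw [integral_indicator measurableSet_Ioc]
    have hb := my_min_int_bound hβ hβ1 (a := x e0) hr hr1
    rw [he0int]
    exact mul_le_mul_of_nonneg_right hb (pow_nonneg (by linarith) _)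

noncomputable section

set_option maxHeartbeats 1000000 in
theorem time_singular_example_Hp
    (d : ℕ) (hd : 0 < d) (α : ℝ)
    (hα : α ∈ Set.Ioc (-(1/2 : ℝ)) (-(1 / (2 * (d : ℝ)))))
    (g : Fin d → ℝ → ℝ)
    (hgmeas : ∀ i, Measurable (g i))
    (hgbdd : ∃ K : ℝ, ∀ i u, |g i u| ≤ K)
    (f : ℝ → EuclideanSpace ℝ (Fin d) → ℝ)
    (hf : ∀ t : ℝ, ∀ y : EuclideanSpace ℝ (Fin d),
      f t y = t ^ (-(1/4 : ℝ)) * (min |y (⟨0, hd⟩ : Fin d)| 1) ^ α *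
        ∏ i ∈ Finset.univ.erase (⟨0, hd⟩ : Fin d), g i (y i)) :
    ((d : ℝ) < (d : ℝ) + 2 * α + 1) ∧
    ∃ M > (0:ℝ), ∀ t : ℝ, 0 ≤ t → ∀ x : EuclideanSpace ℝ (Fin d),
      ∀ r : ℝ, 0 < r → r < 1 →
      (∫ s in Set.Ioc (0:ℝ) (r ^ 2), ∫ y in Metric.ball x r, (f (t + s) y) ^ 2) ≤
        M * r ^ ((d : ℝ) + 2 * α + 1) := by
  obtain ⟨hα1, hα2⟩ := hα
  have hdR : (1:ℝ) ≤ (d:ℝ) := by exact_mod_cast hd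
  have hαneg : α < 0 := by
    have h2d : (0:ℝ) < 2 * (d:ℝ) := by linarith
    have : (0:ℝ) < 1 / (2 * (d:ℝ)) := by positivity
    linarith
  set β : ℝ := 2 * α with hβdef
  have hβ : -1 < β := by simp only [hβdef]; linarith
  have hβ1 : β ≤ 0 := by simp only [hβdef]; linarith
  have hγ0 : (0:ℝ) < β + 1 := by linarith
  obtain ⟨K, hK⟩ := hgbdd
  set K1 : ℝ := max K 1 with hK1
  have hK1pos : (0:ℝ) < K1 := lt_of_lt_of_le one_pos (le_max_right _ _)
  set C : ℝ := (K1 ^ 2) ^ (d - 1) with hC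
  have hCpos : (0:ℝ) < C := by positivity
  set c₁ : ℝ := 4 / (β + 1) + 2 with hc₁
  have hc₁pos : (0:ℝ) < c₁ := by positivity
  refine ⟨by linarith, 2 ^ d * c₁ * C, by positivity, ?_⟩
  intro t ht x r hr hr1
  set e0 : Fin d := ⟨0, hd⟩ with he0
  set rect : Set (Fin d → ℝ) := Set.pi Set.univ fun i => Set.Ioc (x i - r) (x i + r)
    with hrect
  set Q : ℝ := c₁ * r ^ (β + 1) * (2 * r) ^ (d - 1) with hQ
  have hQnn : 0 ≤ Q := by positivity
  obtain ⟨hrectInt, hrectBd⟩ := my_rect_bound d hd hβ hβ1 (fun i => x i) hr hr1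
  set eqv := (MeasurableEquiv.toLp 2 (Fin d → ℝ)).symm with heqv
  have hmp : MeasurePreserving eqv := EuclideanSpace.volume_preserving_symm_measurableEquiv_toLp _
  have hemb : MeasurableEmbedding eqv := eqv.measurableEmbedding
  set Ge : EuclideanSpace ℝ (Fin d) → ℝ := fun y => (min |y e0| 1) ^ β with hGe
  -- transfer of the set integral
  have hkey : (∫ y in eqv ⁻¹' rect, Ge y) = ∫ y in rect,
      (fun y : Fin d → ℝ => (min |y e0| 1) ^ β) y :=
    hmp.setIntegral_preimage_emb hemb (fun y : Fin d → ℝ => (min |y e0| 1) ^ β) rect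
  -- ball is inside the preimage of the rectangle
  have hball_sub : Metric.ball x r ⊆ eqv ⁻¹' rect := by
    intro y hy
    have hyd : dist y x < r := mem_ball.1 hy
    intro i _
    have hdisti : dist (y i) (x i) ≤ dist y x := by
      rw [EuclideanSpace.dist_eq]
      rw [show dist (y i) (x i) = √(dist (y i) (x i) ^ 2) from
        (Real.sqrt_sq dist_nonneg).symm]
      exact Real.sqrt_le_sqrt (Finset.single_le_sum
        (f := fun j => dist (y j) (x j) ^ 2) (fun j _ => sq_nonneg _) (Finset.mem_univ i))
    have habs : |y i - x i| < r := by
      rw [← Real.dist_eq]; exact lt_of_le_of_lt hdisti hyd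
    obtain ⟨h1, h2⟩ := abs_lt.1 habs
    have heqy : eqv y i = y i := rfl
    exact ⟨by rw [heqy]; linarith, by rw [heqy]; linarith⟩
  have hcomp : (fun y : Fin d → ℝ => (min |y e0| 1) ^ β) ∘ ⇑eqv = Ge := by
    funext y
    rfl
  have hGeInt : IntegrableOn Ge (eqv ⁻¹' rect) := by
    have h := (hmp.integrableOn_comp_preimage hemb
      (f := fun y : Fin d → ℝ => (min |y e0| 1) ^ β) (s := rect)).2 hrectInt
    rwa [hcomp] at h
  have hGball_int : IntegrableOn Ge (Metric.ball x r) := hGeInt.mono_set hball_sub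
  have hGball_le : (∫ y in Metric.ball x r, Ge y) ≤ Q := by
    calc (∫ y in Metric.ball x r, Ge y) ≤ ∫ y in eqv ⁻¹' rect, Ge y := by
          refine setIntegral_mono_set hGeInt ?_ (HasSubset.Subset.eventuallyLE hball_sub)
          filter_upwards with y using my_min_nonneg β _
      _ = ∫ y in rect, (fun y : Fin d → ℝ => (min |y e0| 1) ^ β) y := hkey
      _ ≤ Q := hrectBd
  -- pointwise bound
  have hpoint : ∀ s ∈ Set.Ioc (0:ℝ) (r ^ 2), ∀ y : EuclideanSpace ℝ (Fin d),
      (f (t + s) y) ^ 2 ≤ (s ^ (-(1/2):ℝ) * C) * Ge y := by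
    intro s hs y
    rw [hf]
    set A : ℝ := (t + s) ^ (-(1/4):ℝ) with hA
    set m : ℝ := min |y e0| 1 with hm
    have hmnn : 0 ≤ m := le_min (abs_nonneg _) zero_le_one
    set P : ℝ := ∏ i ∈ Finset.univ.erase e0, g i (y i) with hP
    have hts : (0:ℝ) < t + s := by have := hs.1; linarith
    have hAsq : A ^ 2 ≤ s ^ (-(1/2):ℝ) := by
      have h1 : A ^ 2 = (t + s) ^ (-(1/2):ℝ) := by
        rw [hA, ← Real.rpow_natCast ((t+s) ^ (-(1/4):ℝ)) 2, ← Real.rpow_mul hts.le]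
        norm_num
      rw [h1]
      exact Real.rpow_le_rpow_of_nonpos hs.1 (by linarith) (by norm_num)
    have hmsq : (m ^ α) ^ 2 = m ^ β := by
      rw [← Real.rpow_natCast (m ^ α) 2, ← Real.rpow_mul hmnn]
      norm_num [hβdef, mul_comm]
    have hPsq : P ^ 2 ≤ C := by
      rw [hP, ← Finset.prod_pow]
      calc ∏ i ∈ Finset.univ.erase e0, (g i (y i)) ^ 2
          ≤ ∏ i ∈ Finset.univ.erase e0, K1 ^ 2 := by
            refine Finset.prod_le_prod (fun i _ => sq_nonneg _) (fun i _ => ?_)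
            have h := (hK i (y i)).trans (le_max_left K 1)
            obtain ⟨ha, hb⟩ := abs_le.1 h
            exact sq_le_sq' (by linarith) hb
        _ = C := by
            rw [Finset.prod_const, Finset.card_erase_of_mem (Finset.mem_univ e0),
              Finset.card_univ, Fintype.card_fin]
    have hGey : Ge y = m ^ β := rfl
    calc (A * m ^ α * P) ^ 2 = A ^ 2 * ((m ^ α) ^ 2 * P ^ 2) := by ring
      _ ≤ s ^ (-(1/2):ℝ) * (m ^ β * C) := by
          refine mul_le_mul hAsq ?_ (by positivity) (Real.rpow_nonneg hs.1.le _)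
          rw [hmsq]
          exact mul_le_mul_of_nonneg_left hPsq (Real.rpow_nonneg hmnn _)
      _ = (s ^ (-(1/2):ℝ) * C) * Ge y := by rw [hGey]; ring
  -- inner integral bound
  have hinner : ∀ s ∈ Set.Ioc (0:ℝ) (r ^ 2),
      (∫ y in Metric.ball x r, (f (t + s) y) ^ 2) ≤ s ^ (-(1/2):ℝ) * (C * Q) := by
    intro s hs
    have hdom : Integrable (fun y => (s ^ (-(1/2):ℝ) * C) * Ge y)
        (volume.restrict (Metric.ball x r)) := hGball_int.const_mul _
    calc (∫ y in Metric.ball x r, (f (t + s) y) ^ 2)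
        ≤ ∫ y in Metric.ball x r, (s ^ (-(1/2):ℝ) * C) * Ge y := by
          refine integral_mono_of_nonneg ?_ hdom ?_
          · filter_upwards with y using sq_nonneg _
          · filter_upwards with y using hpoint s hs y
      _ = (s ^ (-(1/2):ℝ) * C) * ∫ y in Metric.ball x r, Ge y := by
          rw [MeasureTheory.integral_const_mul]
      _ ≤ (s ^ (-(1/2):ℝ) * C) * Q := by
          refine mul_le_mul_of_nonneg_left hGball_le ?_
          have := Real.rpow_nonneg hs.1.le (-(1/2):ℝ)
          positivity
      _ = s ^ (-(1/2):ℝ) * (C * Q) := by ring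
  -- outer integral
  have houter : (∫ s in Set.Ioc (0:ℝ) (r ^ 2), ∫ y in Metric.ball x r, (f (t + s) y) ^ 2)
      ≤ ∫ s in Set.Ioc (0:ℝ) (r ^ 2), s ^ (-(1/2):ℝ) * (C * Q) := by
    refine integral_mono_of_nonneg ?_ ?_ ?_
    · filter_upwards with s using integral_nonneg (fun y => sq_nonneg _)
    · exact ((intervalIntegral.intervalIntegrable_rpow' (by norm_num)
        (a := 0) (b := r ^ 2)).1).mul_const _
    · exact (ae_restrict_iff' measurableSet_Ioc).2
        (Filter.Eventually.of_forall fun s hs => hinner s hs)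
  have h2r : (∫ s in Set.Ioc (0:ℝ) (r ^ 2), s ^ (-(1/2):ℝ)) = 2 * r := by
    rw [← intervalIntegral.integral_of_le (by positivity : (0:ℝ) ≤ r ^ 2),
      integral_rpow (Or.inl (by norm_num))]
    rw [Real.zero_rpow (by norm_num : -(1/2:ℝ) + 1 ≠ 0)]
    have hhalf : (r ^ 2 : ℝ) ^ (-(1/2:ℝ) + 1) = r := by
      rw [show (-(1/2:ℝ) + 1) = (1/2:ℝ) by norm_num, ← Real.rpow_natCast r 2,
        ← Real.rpow_mul hr.le]
      norm_num
    rw [hhalf]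
    ring
  have hfinal : (∫ s in Set.Ioc (0:ℝ) (r ^ 2), s ^ (-(1/2):ℝ) * (C * Q))
      = 2 * r * (C * Q) := by
    rw [integral_mul_const, h2r]
  rw [hfinal] at houter
  refine houter.trans (le_of_eq ?_)
  -- arithmetic: 2r * (C * Q) = 2^d c₁ C r^(d + 2α + 1)
  have hcast : ((d - 1 : ℕ) : ℝ) = (d:ℝ) - 1 := by
    have h1d : (1:ℕ) ≤ d := hd
    push_cast [Nat.cast_sub h1d]
    ring
  have hexp : ((1:ℝ) + (β + 1)) + ((d:ℝ) - 1) = (d:ℝ) + 2 * α + 1 := by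
    rw [hβdef]; ring
  have hr3 : r * r ^ (β + 1) * (r:ℝ) ^ (d - 1) = r ^ ((d:ℝ) + 2 * α + 1) := by
    have h1 : r * r ^ (β + 1) * (r:ℝ) ^ (d - 1)
        = r ^ (1:ℝ) * r ^ (β + 1) * r ^ (((d - 1 : ℕ)):ℝ) := by
      rw [Real.rpow_one, Real.rpow_natCast]
    rw [h1, ← Real.rpow_add hr, ← Real.rpow_add hr, hcast, hexp]
  have h2d : (2:ℝ) * 2 ^ (d - 1) = 2 ^ d := by
    rw [← pow_succ']
    congr 1
    omega
  calc 2 * r * (C * Q)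
      = ((2:ℝ) * 2 ^ (d - 1)) * c₁ * C * (r * r ^ (β + 1) * (r:ℝ) ^ (d - 1)) := by
        rw [hQ, mul_pow]; ring
    _ = 2 ^ d * c₁ * C * r ^ ((d:ℝ) + 2 * α + 1) := by rw [h2d, hr3]
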